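/- Let A be a semigroup in a braided monoidal category C whose multiplication m is non-degenerate with respect to some class of objects containing A and A⊗A, and let t₁, t₂, t₃, t₄ : A⊗A → A⊗A satisfy all six compatibility relations (c12)–(c34). Then the four interchange relations — (t₂⊗1)∘(1⊗t₁) = (1⊗t₁)∘(t₂⊗1), (t₄⊗1)∘(1⊗t₁) = (1⊗t₁)∘(t₄⊗1), (t₂⊗1)∘(1⊗t₃) = (1⊗t₃)∘(t₂⊗1), and (t₄⊗1)∘(1⊗t₃) = (1⊗t₃)∘(t₄⊗1), all morphisms A⊗A⊗A → A⊗A⊗A — are equivalent to each other. -/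

import Mathlib

/-!
Left non-degeneracy of `m` with respect to `A ⊗ A` makes `f ↦ (m ⊗ 1) ∘ (1 ⊗ f)` injective on
morphisms into `A ⊗ A ⊗ A`, and right non-degeneracy does the same for `m ∘ c`. So an interchange
relation may be tested after multiplying one of its legs by an extra copy of `A`.

For `t₂` against `t₄` the first leg is multiplied (by `m ∘ c`, resp. `m`); by (c24) the two tests
then differ only by a braiding of the new leg with the first one, which commutes with the second
operator. For `t₁` against `t₃` the last leg is first rotated to the front and then multiplied; by
(c13) the two tests differ by braid isomorphisms that commute with the first operator. This gives
1 ↔ 2 and 3 ↔ 4 from (c24), and 1 ↔ 3 from (c13).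
-/

open CategoryTheory Category MonoidalCategory

universe v u

namespace WeakMultiplierBimonoid

variable {C : Type u} [Category.{v} C] [MonoidalCategory C] [BraidedCategory C]

/-- For `f : A ⊗ A ⟶ A ⊗ A`, the morphism `f ⊗ 1 : A ⊗ (A ⊗ A) ⟶ A ⊗ (A ⊗ A)`. -/
def wl {A : C} (f : A ⊗ A ⟶ A ⊗ A) : A ⊗ (A ⊗ A) ⟶ A ⊗ (A ⊗ A) :=
  (α_ A A A).inv ≫ (f ▷ A) ≫ (α_ A A A).hom

/-- For `f : A ⊗ A ⟶ A`, the morphism `f ⊗ 1 : A ⊗ (A ⊗ A) ⟶ A ⊗ A`. -/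
def ml {A : C} (f : A ⊗ A ⟶ A) : A ⊗ (A ⊗ A) ⟶ A ⊗ A :=
  (α_ A A A).inv ≫ (f ▷ A)

/-- A morphism `v : Z ⊗ V ⟶ W` is non-degenerate on the left with respect to a class
`𝒴` of objects if for every `X` and every `Y ∈ 𝒴` the map
`Hom(X, V ⊗ Y) → Hom(Z ⊗ X, W ⊗ Y)`, `g ↦ (v ⊗ 1) ∘ (1 ⊗ g)`, is injective. -/
def NdLeftOn {Z V W : C} (v : Z ⊗ V ⟶ W) (𝒴 : Set C) : Prop :=
  ∀ (X : C), ∀ Y ∈ 𝒴, Function.Injective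
    (fun g : X ⟶ V ⊗ Y => (Z ◁ g) ≫ (α_ Z V Y).inv ≫ (v ▷ Y))

/-- Non-degenerate on the right with respect to `𝒴`: `v ∘ c` is non-degenerate on the
left with respect to `𝒴`. -/
def NdRightOn {Z V W : C} (v : Z ⊗ V ⟶ W) (𝒴 : Set C) : Prop :=
  NdLeftOn ((β_ V Z).hom ≫ v) 𝒴

/-- Relation (c12): `(m ⊗ 1) ∘ (1 ⊗ t₁) = (1 ⊗ m) ∘ (t₂ ⊗ 1)`. -/
def C12 {A : C} (m : A ⊗ A ⟶ A) (t₁ t₂ : A ⊗ A ⟶ A ⊗ A) : Prop :=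
  (A ◁ t₁) ≫ ml m = wl t₂ ≫ (A ◁ m)

/-- Relation (c13): `(1 ⊗ m) ∘ (1 ⊗ c) ∘ (t₁ ⊗ 1) = (1 ⊗ m) ∘ (t₃ ⊗ 1) ∘ (1 ⊗ c)`. -/
def C13 {A : C} (m : A ⊗ A ⟶ A) (t₁ t₃ : A ⊗ A ⟶ A ⊗ A) : Prop :=
  wl t₁ ≫ (A ◁ (β_ A A).hom) ≫ (A ◁ m)
    = (A ◁ (β_ A A).hom) ≫ wl t₃ ≫ (A ◁ m)

/-- Relation (c14): `(m ⊗ 1) ∘ (c ⊗ 1) ∘ (1 ⊗ t₁) = (1 ⊗ m) ∘ (t₄ ⊗ 1)`. -/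
def C14 {A : C} (m : A ⊗ A ⟶ A) (t₁ t₄ : A ⊗ A ⟶ A ⊗ A) : Prop :=
  (A ◁ t₁) ≫ wl (β_ A A).hom ≫ ml m = wl t₄ ≫ (A ◁ m)

/-- Relation (c23): `(1 ⊗ m) ∘ (1 ⊗ c) ∘ (t₂ ⊗ 1) = (m ⊗ 1) ∘ (1 ⊗ t₃)`. -/
def C23 {A : C} (m : A ⊗ A ⟶ A) (t₂ t₃ : A ⊗ A ⟶ A ⊗ A) : Prop :=
  wl t₂ ≫ (A ◁ (β_ A A).hom) ≫ (A ◁ m) = (A ◁ t₃) ≫ ml m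

/-- Relation (c24): `(m ⊗ 1) ∘ (c ⊗ 1) ∘ (1 ⊗ t₂) = (m ⊗ 1) ∘ (1 ⊗ t₄) ∘ (c ⊗ 1)`. -/
def C24 {A : C} (m : A ⊗ A ⟶ A) (t₂ t₄ : A ⊗ A ⟶ A ⊗ A) : Prop :=
  (A ◁ t₂) ≫ wl (β_ A A).hom ≫ ml m = wl (β_ A A).hom ≫ (A ◁ t₄) ≫ ml m

/-- Relation (c34): `(m ⊗ 1) ∘ (c ⊗ 1) ∘ (1 ⊗ t₃) = (1 ⊗ m) ∘ (1 ⊗ c) ∘ (t₄ ⊗ 1)`. -/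
def C34 {A : C} (m : A ⊗ A ⟶ A) (t₃ t₄ : A ⊗ A ⟶ A ⊗ A) : Prop :=
  (A ◁ t₃) ≫ wl (β_ A A).hom ≫ ml m = wl t₄ ≫ (A ◁ (β_ A A).hom) ≫ (A ◁ m)

/-- The interchange relation `(x ⊗ 1) ∘ (1 ⊗ y) = (1 ⊗ y) ∘ (x ⊗ 1)`. -/
def Interchange {A : C} (x y : A ⊗ A ⟶ A ⊗ A) : Prop :=
  (A ◁ y) ≫ wl x = wl x ≫ (A ◁ y)

end WeakMultiplierBimonoid

namespace WeakMultiplierBimonoid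

lemma comp_eq_comp_iff_of_eq_conj {D : Type*} [Category D] {X X' Y Y' : D}
    {P : X ⟶ Y} {Q : X' ⟶ Y'} (S : X ≅ X') (T : Y' ≅ Y) (hPQ : P = S.hom ≫ Q ≫ T.hom)
    {u : X ⟶ X} {u' : X' ⟶ X'} {w : Y ⟶ Y} {w' : Y' ⟶ Y'}
    (hu : u ≫ S.hom = S.hom ≫ u') (hw : w' ≫ T.hom = T.hom ≫ w) :
    u ≫ P = P ≫ w ↔ u' ≫ Q = Q ≫ w' := by
  rw [hPQ, reassoc_of% hu, assoc, assoc, ← hw, cancel_epi, ← assoc, ← assoc, cancel_mono]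

section Monoidal

variable {C : Type u} [Category.{v} C] [MonoidalCategory C] {A : C}

def mulFirst (v : A ⊗ A ⟶ A) : A ⊗ (A ⊗ (A ⊗ A)) ⟶ A ⊗ (A ⊗ A) :=
  (α_ A A (A ⊗ A)).inv ≫ (v ▷ (A ⊗ A))

lemma whiskerLeft_comp_mulFirst_injective {𝒴 : Set C} {v : A ⊗ A ⟶ A} (hv : NdLeftOn v 𝒴)
    (hAA : A ⊗ A ∈ 𝒴) (X : C) :
    Function.Injective fun g : X ⟶ A ⊗ (A ⊗ A) => (A ◁ g) ≫ mulFirst v :=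
  hv X _ hAA

lemma whiskerLeft_whiskerLeft_comp_mulFirst (v : A ⊗ A ⟶ A) (y : A ⊗ A ⟶ A ⊗ A) :
    (A ◁ (A ◁ y)) ≫ mulFirst v = mulFirst v ≫ (A ◁ y) := by
  rw [mulFirst, associator_inv_naturality_right_assoc, whisker_exchange, assoc]

lemma interchange_iff_whiskerLeft_wl_comp_mulFirst {𝒴 : Set C} {v : A ⊗ A ⟶ A}
    (hv : NdLeftOn v 𝒴) (hAA : A ⊗ A ∈ 𝒴) (x y : A ⊗ A ⟶ A ⊗ A) :
    Interchange x y ↔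
      (A ◁ (A ◁ y)) ≫ (A ◁ wl x) ≫ mulFirst v = ((A ◁ wl x) ≫ mulFirst v) ≫ (A ◁ y) := by
  rw [Interchange, ← (whiskerLeft_comp_mulFirst_injective hv hAA _).eq_iff]
  simp only [MonoidalCategory.whiskerLeft_comp, assoc, whiskerLeft_whiskerLeft_comp_mulFirst]

lemma interchange_iff_whiskerLeft_comp_mulFirst {𝒴 : Set C} {v : A ⊗ A ⟶ A}
    (hv : NdLeftOn v 𝒴) (hAA : A ⊗ A ∈ 𝒴) {x : A ⊗ A ⟶ A ⊗ A} (G : A ⊗ (A ⊗ A) ≅ A ⊗ (A ⊗ A))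
    (hG : wl x ≫ G.hom = G.hom ≫ (A ◁ x)) (y : A ⊗ A ⟶ A ⊗ A) :
    Interchange x y ↔
      (A ◁ wl x) ≫ (A ◁ ((A ◁ y) ≫ G.hom)) ≫ mulFirst v
        = ((A ◁ ((A ◁ y) ≫ G.hom)) ≫ mulFirst v) ≫ (A ◁ x) := by
  rw [Interchange, ← cancel_mono G.hom, ← (whiskerLeft_comp_mulFirst_injective hv hAA _).eq_iff]
  simp only [MonoidalCategory.whiskerLeft_comp, assoc, hG, whiskerLeft_whiskerLeft_comp_mulFirst]
  exact eq_comm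

def wl₂ (x : A ⊗ A ⟶ A ⊗ A) : A ⊗ (A ⊗ (A ⊗ A)) ⟶ A ⊗ (A ⊗ (A ⊗ A)) :=
  (α_ A A (A ⊗ A)).inv ≫ (x ▷ (A ⊗ A)) ≫ (α_ A A (A ⊗ A)).hom

lemma whiskerLeft_whiskerLeft_comp_wl₂ (x y : A ⊗ A ⟶ A ⊗ A) :
    (A ◁ (A ◁ y)) ≫ wl₂ x = wl₂ x ≫ (A ◁ (A ◁ y)) := by
  simp only [wl₂, assoc]
  rw [associator_inv_naturality_right_assoc, whisker_exchange_assoc, associator_naturality_right]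

end Monoidal

section Braided

open BraidedCategory

variable {C : Type u} [Category.{v} C] [MonoidalCategory C] [BraidedCategory C] {A : C}

def braidFirst (A : C) : A ⊗ (A ⊗ (A ⊗ A)) ≅ A ⊗ (A ⊗ (A ⊗ A)) :=
  (α_ A A (A ⊗ A)).symm ≪≫ whiskerRightIso (β_ A A) (A ⊗ A) ≪≫ α_ A A (A ⊗ A)

lemma whiskerLeft_wl_comp_mulFirst_of_c24 {m : A ⊗ A ⟶ A} {t₂ t₄ : A ⊗ A ⟶ A ⊗ A}
    (h24 : C24 m t₂ t₄) :
    (A ◁ wl t₂) ≫ mulFirst ((β_ A A).hom ≫ m)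
      = (braidFirst A).hom ≫ (A ◁ wl t₄) ≫ mulFirst m := by
  have h := congrArg
    (fun h => (A ◁ (α_ A A A).inv) ≫ (α_ A (A ⊗ A) A).inv ≫ (h ▷ A) ≫ (α_ A A A).hom) h24
  refine Eq.trans ?_ (h.trans ?_) <;>
    simp only [mulFirst, braidFirst, wl, ml, Iso.trans_hom, Iso.symm_hom,
      whiskerRightIso_hom, comp_whiskerRight, MonoidalCategory.whiskerLeft_comp, assoc] <;>
    monoidal

lemma interchange_iff_of_c24 {𝒴 : Set C} {m : A ⊗ A ⟶ A}
    (hndl : NdLeftOn m 𝒴) (hndr : NdRightOn m 𝒴) (hAA : A ⊗ A ∈ 𝒴)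
    {t₂ t₄ : A ⊗ A ⟶ A ⊗ A} (h24 : C24 m t₂ t₄) (y : A ⊗ A ⟶ A ⊗ A) :
    Interchange t₂ y ↔ Interchange t₄ y := by
  rw [interchange_iff_whiskerLeft_wl_comp_mulFirst hndr hAA,
    interchange_iff_whiskerLeft_wl_comp_mulFirst hndl hAA]
  -- `(braidFirst A).hom` unfolds to `wl₂ (β_ A A).hom`
  exact comp_eq_comp_iff_of_eq_conj (braidFirst A) (Iso.refl _)
    (by simpa using whiskerLeft_wl_comp_mulFirst_of_c24 h24)
    (whiskerLeft_whiskerLeft_comp_wl₂ _ y) (by simp)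

def lastToFirst (A : C) : A ⊗ (A ⊗ A) ≅ A ⊗ (A ⊗ A) :=
  (α_ A A A).symm ≪≫ β_ (A ⊗ A) A

def lastToFirst' (A : C) : A ⊗ (A ⊗ A) ≅ A ⊗ (A ⊗ A) :=
  (α_ A A A).symm ≪≫ (β_ A (A ⊗ A)).symm

def firstToLast (A : C) : A ⊗ (A ⊗ (A ⊗ A)) ≅ A ⊗ (A ⊗ (A ⊗ A)) :=
  β_ A (A ⊗ (A ⊗ A)) ≪≫ α_ A (A ⊗ A) A ≪≫ whiskerLeftIso A (α_ A A A)

def firstToLast' (A : C) : A ⊗ (A ⊗ (A ⊗ A)) ≅ A ⊗ (A ⊗ (A ⊗ A)) :=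
  (β_ (A ⊗ (A ⊗ A)) A).symm ≪≫ α_ A (A ⊗ A) A ≪≫ whiskerLeftIso A (α_ A A A)

lemma whiskerLeft_lastToFirst_comp_mulFirst (v : A ⊗ A ⟶ A) :
    (A ◁ (lastToFirst A).hom) ≫ mulFirst v
      = (firstToLast' A).hom ≫ (A ◁ (A ◁ ((β_ A A).hom ≫ v))) ≫ (lastToFirst A).hom := by
  simp only [lastToFirst, firstToLast', mulFirst, Iso.trans_hom, Iso.symm_hom, whiskerLeftIso_hom,
    MonoidalCategory.whiskerLeft_comp, assoc]
  rw [associator_inv_naturality_right_assoc, braiding_naturality_right]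
  simp [braiding_tensor_left_hom, braiding_tensor_right_hom]

lemma associator_inv_comp_braiding_whiskerRight :
    (α_ A A (A ⊗ A)).inv ≫ ((β_ A A).hom ▷ (A ⊗ A))
      = (A ◁ (lastToFirst' A).inv) ≫ (firstToLast A).hom ≫ (α_ A A (A ⊗ A)).inv
        ≫ (β_ (A ⊗ A) (A ⊗ A)).inv := by
  rw [← cancel_mono (β_ (A ⊗ A) (A ⊗ A)).hom]
  simp only [assoc, Iso.inv_hom_id, comp_id]
  rw [braiding_naturality_left, braiding_tensor_left_hom]
  simp only [lastToFirst', firstToLast, Iso.trans_hom, Iso.trans_inv, Iso.symm_inv,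
    whiskerLeftIso_hom, braiding_tensor_right_hom, MonoidalCategory.whiskerLeft_comp,
    comp_whiskerRight, assoc]
  monoidal

lemma whiskerLeft_lastToFirst'_comp_mulFirst (v : A ⊗ A ⟶ A) :
    (A ◁ (lastToFirst' A).hom) ≫ mulFirst ((β_ A A).hom ≫ v)
      = (firstToLast A).hom ≫ (A ◁ (A ◁ v)) ≫ (lastToFirst' A).hom := by
  rw [mulFirst, comp_whiskerRight, reassoc_of% associator_inv_comp_braiding_whiskerRight,
    ← MonoidalCategory.whiskerLeft_comp_assoc, Iso.hom_inv_id, MonoidalCategory.whiskerLeft_id,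
    id_comp, lastToFirst', Iso.trans_hom, Iso.symm_hom, Iso.symm_hom,
    associator_inv_naturality_right_assoc, braiding_inv_naturality_right]

lemma wl_comp_lastToFirst (x : A ⊗ A ⟶ A ⊗ A) :
    wl x ≫ (lastToFirst A).hom = (lastToFirst A).hom ≫ (A ◁ x) := by
  simp only [wl, lastToFirst, Iso.trans_hom, Iso.symm_hom, assoc, Iso.hom_inv_id_assoc,
    braiding_naturality_left]

lemma wl_comp_lastToFirst' (x : A ⊗ A ⟶ A ⊗ A) :
    wl x ≫ (lastToFirst' A).hom = (lastToFirst' A).hom ≫ (A ◁ x) := by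
  simp only [wl, lastToFirst', Iso.trans_hom, Iso.symm_hom, assoc, Iso.hom_inv_id_assoc,
    braiding_inv_naturality_left]

lemma whiskerLeft_whiskerLeft_comp_firstToLast (f : A ⊗ A ⟶ A ⊗ A) :
    (A ◁ (A ◁ f)) ≫ (firstToLast A).hom = (firstToLast A).hom ≫ (A ◁ wl f) := by
  simp only [firstToLast, Iso.trans_hom, whiskerLeftIso_hom, assoc, braiding_naturality_right_assoc,
    wl, MonoidalCategory.whiskerLeft_comp]
  monoidal

lemma whiskerLeft_whiskerLeft_comp_firstToLast' (f : A ⊗ A ⟶ A ⊗ A) :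
    (A ◁ (A ◁ f)) ≫ (firstToLast' A).hom = (firstToLast' A).hom ≫ (A ◁ wl f) := by
  simp only [firstToLast', Iso.trans_hom, Iso.symm_hom, whiskerLeftIso_hom, assoc,
    braiding_inv_naturality_right_assoc, wl, MonoidalCategory.whiskerLeft_comp]
  monoidal

lemma whiskerLeft_wl_comp_firstToLast (x : A ⊗ A ⟶ A ⊗ A) :
    (A ◁ wl x) ≫ (firstToLast A).hom = (firstToLast A).hom ≫ wl₂ x := by
  simp only [firstToLast, wl₂, Iso.trans_hom, whiskerLeftIso_hom, assoc,
    braiding_naturality_right_assoc, wl, MonoidalCategory.whiskerLeft_comp]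
  monoidal

lemma whiskerLeft_wl_comp_firstToLast' (x : A ⊗ A ⟶ A ⊗ A) :
    (A ◁ wl x) ≫ (firstToLast' A).hom = (firstToLast' A).hom ≫ wl₂ x := by
  simp only [firstToLast', wl₂, Iso.trans_hom, Iso.symm_hom, whiskerLeftIso_hom, assoc,
    braiding_inv_naturality_right_assoc, wl, MonoidalCategory.whiskerLeft_comp]
  monoidal

lemma whiskerLeft_comp_mulFirst_of_c13 {m : A ⊗ A ⟶ A} {t₁ t₃ : A ⊗ A ⟶ A ⊗ A}
    (h13 : C13 m t₁ t₃) :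
    (A ◁ ((A ◁ t₁) ≫ (lastToFirst A).hom)) ≫ mulFirst m
      = (firstToLast' A ≪≫ whiskerLeftIso A (whiskerLeftIso A (β_ A A)) ≪≫ (firstToLast A).symm).hom
        ≫ ((A ◁ ((A ◁ t₃) ≫ (lastToFirst' A).hom)) ≫ mulFirst ((β_ A A).hom ≫ m))
        ≫ ((lastToFirst' A).symm ≪≫ lastToFirst A).hom := by
  have h := congrArg (fun h => (firstToLast' A).hom ≫ (A ◁ h) ≫ (lastToFirst A).hom) h13
  simp only [MonoidalCategory.whiskerLeft_comp, assoc] at h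
  simp only [Iso.trans_hom, Iso.symm_hom, whiskerLeftIso_hom, MonoidalCategory.whiskerLeft_comp,
    assoc, whiskerLeft_lastToFirst_comp_mulFirst, whiskerLeft_lastToFirst'_comp_mulFirst,
    reassoc_of% whiskerLeft_whiskerLeft_comp_firstToLast,
    reassoc_of% whiskerLeft_whiskerLeft_comp_firstToLast', Iso.inv_hom_id_assoc,
    Iso.hom_inv_id_assoc]
  exact h

lemma interchange_iff_of_c13 {𝒴 : Set C} {m : A ⊗ A ⟶ A}
    (hndl : NdLeftOn m 𝒴) (hndr : NdRightOn m 𝒴) (hAA : A ⊗ A ∈ 𝒴)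
    {t₁ t₃ : A ⊗ A ⟶ A ⊗ A} (h13 : C13 m t₁ t₃) (x : A ⊗ A ⟶ A ⊗ A) :
    Interchange x t₁ ↔ Interchange x t₃ := by
  rw [interchange_iff_whiskerLeft_comp_mulFirst hndl hAA _ (wl_comp_lastToFirst x),
    interchange_iff_whiskerLeft_comp_mulFirst hndr hAA _ (wl_comp_lastToFirst' x)]
  refine comp_eq_comp_iff_of_eq_conj _ _ (whiskerLeft_comp_mulFirst_of_c13 h13) ?_ ?_
  · have h : wl₂ x ≫ (firstToLast A).inv = (firstToLast A).inv ≫ (A ◁ wl x) := by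
      rw [Iso.comp_inv_eq, assoc, whiskerLeft_wl_comp_firstToLast, Iso.inv_hom_id_assoc]
    simp only [Iso.trans_hom, Iso.symm_hom, whiskerLeftIso_hom, assoc,
      reassoc_of% whiskerLeft_wl_comp_firstToLast']
    rw [← reassoc_of% whiskerLeft_whiskerLeft_comp_wl₂, h]
  · have h : (A ◁ x) ≫ (lastToFirst' A).inv = (lastToFirst' A).inv ≫ wl x := by
      rw [Iso.comp_inv_eq, assoc, wl_comp_lastToFirst', Iso.inv_hom_id_assoc]
    simp only [Iso.trans_hom, Iso.symm_hom, assoc, reassoc_of% h, wl_comp_lastToFirst]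

end Braided

variable {C : Type u} [Category.{v} C] [MonoidalCategory C] [BraidedCategory C]

theorem lemma_interchange_general
    (A : C) (𝒴 : Set C) (hAA : (A ⊗ A) ∈ 𝒴)
    (m : A ⊗ A ⟶ A)
    (hndl : NdLeftOn m 𝒴) (hndr : NdRightOn m 𝒴)
    (t₁ t₂ t₃ t₄ : A ⊗ A ⟶ A ⊗ A)
    (h13 : C13 m t₁ t₃)
    (h24 : C24 m t₂ t₄) :
    [Interchange t₂ t₁, Interchange t₄ t₁,
     Interchange t₂ t₃, Interchange t₄ t₃].TFAE := by
  tfae_have 1 ↔ 2 := interchange_iff_of_c24 hndl hndr hAA h24 t₁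
  tfae_have 3 ↔ 4 := interchange_iff_of_c24 hndl hndr hAA h24 t₃
  tfae_have 1 ↔ 3 := interchange_iff_of_c13 hndl hndr hAA h13 t₂
  tfae_finish

/-- Lemma 2.6: the four interchange relations are equivalent. -/
theorem lemma_interchange
    (A : C) (𝒴 : Set C) (hA : A ∈ 𝒴) (hAA : (A ⊗ A) ∈ 𝒴)
    (m : A ⊗ A ⟶ A)
    (hassoc : ml m ≫ m = (A ◁ m) ≫ m)
    (hndl : NdLeftOn m 𝒴) (hndr : NdRightOn m 𝒴)
    (t₁ t₂ t₃ t₄ : A ⊗ A ⟶ A ⊗ A)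
    (h12 : C12 m t₁ t₂) (h13 : C13 m t₁ t₃) (h14 : C14 m t₁ t₄)
    (h23 : C23 m t₂ t₃) (h24 : C24 m t₂ t₄) (h34 : C34 m t₃ t₄) :
    [Interchange t₂ t₁, Interchange t₄ t₁,
     Interchange t₂ t₃, Interchange t₄ t₃].TFAE :=
  lemma_interchange_general A 𝒴 hAA m hndl hndr t₁ t₂ t₃ t₄ h13 h24

end WeakMultiplierBimonoid
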